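/- Let p be a natural number, let W = (Fin p → Bool) be the index type of a p-qubit witness register, let K be a nonempty finite type indexing the remaining registers, and fix a basis index a₀ ∈ K. Let U be a unitary matrix and Π an orthogonal projection matrix, both indexed by K × W over ℂ, and define the Marriott–Watrous matrix Q indexed by W by Q y y' = (Uᴴ Π U) ((a₀,y),(a₀,y')). Introduce a copy register D = (Fin p → Bool), let C be the permutation matrix indexed by (K × W) × D that maps the basis element ((k,y),d) to ((k,y), fun i => xor (d i) (y i)) (i.e., a CNOT from each witness qubit onto the corresponding copy qubit), and define Q̃ indexed by W by Q̃ y y' = (Cᴴ ((Uᴴ Π U) ⊗ I_D) C) (((a₀,y),0̄),((a₀,y'),0̄)), where 0̄ ∈ D is the all-false string and ⊗ is the Kronecker product. Then Q̃ is diagonal with the same diagonal as Q: for all y, y' ∈ W, Q̃ y y' = (if y = y' then Q y y else 0). -/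
import Mathlib


open scoped Kronecker Matrix

/-- The `CNOT`-trick: prepending CNOTs copying the witness register into a fresh
register makes the Marriott–Watrous operator diagonal in the computational basis. -/
theorem cnot_trick
    (p : ℕ) (K : Type*) [Fintype K] [Nonempty K] [DecidableEq K] (a₀ : K)
    (U P : Matrix (K × (Fin p → Bool)) (K × (Fin p → Bool)) ℂ)
    (hU : Uᴴ * U = 1) (hP_sa : Pᴴ = P) (hP_proj : P * P = P)
    (Q : Matrix (Fin p → Bool) (Fin p → Bool) ℂ)
    (hQ : ∀ y y' : Fin p → Bool, Q y y' = (Uᴴ * P * U) (a₀, y) (a₀, y'))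
    (C : Matrix ((K × (Fin p → Bool)) × (Fin p → Bool))
               ((K × (Fin p → Bool)) × (Fin p → Bool)) ℂ)
    (hC : ∀ a b, C a b = if a = (b.1, fun i => xor (b.2 i) (b.1.2 i)) then 1 else 0)
    (Qt : Matrix (Fin p → Bool) (Fin p → Bool) ℂ)
    (hQt : ∀ y y' : Fin p → Bool, Qt y y' =
      (Cᴴ * ((Uᴴ * P * U) ⊗ₖ (1 : Matrix (Fin p → Bool) (Fin p → Bool) ℂ)) * C)
        ((a₀, y), fun _ => false) ((a₀, y'), fun _ => false)) :
    ∀ y y' : Fin p → Bool, Qt y y' = if y = y' then Q y y else 0 := by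
  intro y y'
  rw [hQt]
  simp only [Matrix.mul_apply, Matrix.conjTranspose_apply, hC, Matrix.kroneckerMap_apply]
  have hst : ∀ (c : Prop) [Decidable c], star (if c then (1:ℂ) else 0) = if c then 1 else 0 := by
    intro c _; split <;> simp
  simp only [hst, ite_mul, one_mul, zero_mul, mul_ite, mul_one, mul_zero]
  simp only [Finset.sum_ite_eq, Finset.sum_ite_eq', Finset.mem_univ, if_true]
  rw [Matrix.one_apply]
  by_cases h : y = y'
  · subst h
    simp [hQ, Matrix.mul_apply, Matrix.conjTranspose_apply]
  · have h2 : (fun i => y i) ≠ fun i => y' i := fun hh => h (funext fun i => congrFun hh i)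
    simp [h, h2]
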